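/- (Summation by parts for nabla fractional sums) Let α > 0, let a, b be integers with a < b, let f, g : ℤ → ℝ. Define the left fractional sum (∇_a^{−α} f)(t) = (1/Γ(α)) Σ_{s=a+1}^{t} (t−s+1)^{\overline{α−1}} f(s) and the right fractional sum ( _b∇^{−α} g)(t) = (1/Γ(α)) Σ_{s=t}^{b−1} (s−t+1)^{\overline{α−1}} g(s), where x^{\overline{β}} = Γ(x+β)/Γ(x). Then Σ_{s=a+1}^{b−1} g(s)·(∇_a^{−α} f)(s) = Σ_{s=a+1}^{b−1} f(s)·( _b∇^{−α} g)(s). -/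
import Mathlib


/-- rising power x^{β̄} = Γ(x+β)/Γ(x) -/
noncomputable def rising (x β : ℝ) : ℝ := Real.Gamma (x + β) / Real.Gamma x

/-- nabla left fractional sum starting at a -/
noncomputable def leftSum (α : ℝ) (a : ℤ) (f : ℤ → ℝ) (t : ℤ) : ℝ :=
  (1 / Real.Gamma α) * ∑ s ∈ Finset.Icc (a + 1) t, rising ((t - s + 1 : ℤ) : ℝ) (α - 1) * f s

/-- nabla right fractional sum ending at b -/
noncomputable def rightSum (α : ℝ) (b : ℤ) (g : ℤ → ℝ) (t : ℤ) : ℝ :=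
  (1 / Real.Gamma α) * ∑ s ∈ Finset.Icc t (b - 1), rising ((s - t + 1 : ℤ) : ℝ) (α - 1) * g s

theorem summation_by_parts_fractional_sums (α : ℝ) (hα : 0 < α) (a b : ℤ) (hab : a < b)
    (f g : ℤ → ℝ) :
    ∑ s ∈ Finset.Icc (a + 1) (b - 1), g s * leftSum α a f s
      = ∑ s ∈ Finset.Icc (a + 1) (b - 1), f s * rightSum α b g s := by
  simp only [leftSum, rightSum, Finset.mul_sum]
  rw [Finset.sum_comm' (s := Finset.Icc (a + 1) (b - 1)) (t := fun x => Finset.Icc (a + 1) x)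
    (t' := Finset.Icc (a + 1) (b - 1)) (s' := fun u => Finset.Icc u (b - 1))
    (fun x y => by simp only [Finset.mem_Icc]; omega)]
  exact Finset.sum_congr rfl fun u _ => Finset.sum_congr rfl fun s _ => by ring
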